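/- arXiv:0904.4005 — 2 statements merged into one kernel-verified Lean document; each statement's English description precedes it below -/
import Mathlib

section
/- Fix a prime q and unramified Satake parameters α, β ∈ ℂ^× with αβ = 1 (trivial central character). Define β_k = q^{k/2}(α^{k+1} − β^{k+1})/(α − β) for k ≥ 0 and β_k = 0 for k < 0. Then for complex s with |q^{-6s-2}| max(|α|²,|β|²) < 1, the series Σ_{n≥0} q^{-6n(s+1/2)}(β_{2n} − β_{2n−2}) converges and equals (1 − q^{-6s-3})(1 + q^{-6s-2}) / ((1 − α²q^{-6s-2})(1 − β²q^{-6s-2})). -/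
open Complex

noncomputable section

/-- The GL(2) Hecke eigenvalue `β_k = q^{k/2}(α^{k+1} − β^{k+1})/(α − β)`
for `k ≥ 0`, and `β_k = 0` for `k < 0`. -/
def bcoef (q : ℕ) (α β : ℂ) (k : ℤ) : ℂ :=
  if k < 0 then 0
  else (Real.sqrt q : ℂ) ^ k.toNat * (α ^ (k.toNat + 1) - β ^ (k.toNat + 1)) / (α - β)

/-!
Writing `β_{2n} = q^n (α^{2n+1} − β^{2n+1})/(α − β)` splits `Σ t^n β_{2n}` into two geometric
series in `α² t q` and `β² t q`; with `αβ = 1` they add up to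
`(1 + tq)/((1 − α² t q)(1 − β² t q))`. Subtracting `β_{2n−2}` shifts the sequence by one step,
which multiplies the generating function by `1 − t`.
-/

theorem HasSum.pow_mul_sub_shift {R : Type*} [CommRing R] [TopologicalSpace R]
    [IsTopologicalRing R] {t S : R} {a b : ℕ → R} (ha : HasSum (fun n => t ^ n * a n) S)
    (hb₀ : b 0 = 0) (hb : ∀ n, b (n + 1) = a n) :
    HasSum (fun n => t ^ n * (a n - b n)) ((1 - t) * S) := by
  have hshift : HasSum (fun n => t ^ (n + 1) * b (n + 1)) (t * S) := by
    simpa only [hb, pow_succ', mul_assoc] using ha.mul_left t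
  have hb_sum : HasSum (fun n => t ^ n * b n) (t * S) := by
    simpa [hb₀] using (hasSum_nat_add_iff (f := fun n => t ^ n * b n) 1).mp hshift
  simpa only [mul_sub, sub_mul, one_mul] using ha.sub hb_sum

theorem hasSum_pow_mul_odd_pow_sub_div {𝕜 : Type*} [NormedField 𝕜] [CompleteSpace 𝕜]
    {α β u : 𝕜} (hαβ : α * β = 1) (hne : α ≠ β) (hα : ‖α ^ 2 * u‖ < 1) (hβ : ‖β ^ 2 * u‖ < 1) :
    HasSum (fun n : ℕ => u ^ n * ((α ^ (2 * n + 1) - β ^ (2 * n + 1)) / (α - β)))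
      ((1 + u) / ((1 - α ^ 2 * u) * (1 - β ^ 2 * u))) := by
  have hsub : α - β ≠ 0 := sub_ne_zero.mpr hne
  have hα₁ : 1 - α ^ 2 * u ≠ 0 := sub_ne_zero.mpr fun h => by simp [← h] at hα
  have hβ₁ : 1 - β ^ 2 * u ≠ 0 := sub_ne_zero.mpr fun h => by simp [← h] at hβ
  have hterm : ∀ n : ℕ, u ^ n * ((α ^ (2 * n + 1) - β ^ (2 * n + 1)) / (α - β)) =
      α / (α - β) * (α ^ 2 * u) ^ n - β / (α - β) * (β ^ 2 * u) ^ n := fun n => by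
    field_simp
    ring
  have hvalue : (1 + u) / ((1 - α ^ 2 * u) * (1 - β ^ 2 * u)) =
      α / (α - β) * (1 - α ^ 2 * u)⁻¹ - β / (α - β) * (1 - β ^ 2 * u)⁻¹ := by
    -- partial fractions: `α (1 - β² u) - β (1 - α² u) = (α - β) (1 + αβ u)`
    rw [← div_eq_mul_inv, ← div_eq_mul_inv, div_div, div_div,
      div_sub_div _ _ (mul_ne_zero hsub hα₁) (mul_ne_zero hsub hβ₁),
      div_eq_div_iff (mul_ne_zero hα₁ hβ₁) (mul_ne_zero (mul_ne_zero hsub hα₁) (mul_ne_zero hsub hβ₁))]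
    linear_combination -(α - β) ^ 2 * u * (1 - α ^ 2 * u) * (1 - β ^ 2 * u) * hαβ
  simpa only [hterm, hvalue] using
    ((hasSum_geometric_of_norm_lt_one hα).mul_left (α / (α - β))).sub
      ((hasSum_geometric_of_norm_lt_one hβ).mul_left (β / (α - β)))

theorem bcoef_two_mul (q : ℕ) (α β : ℂ) (n : ℕ) :
    bcoef q α β (2 * n) = (q : ℂ) ^ n * ((α ^ (2 * n + 1) - β ^ (2 * n + 1)) / (α - β)) := by
  have hsqrt : (Real.sqrt q : ℂ) ^ (2 * n) = (q : ℂ) ^ n := by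
    rw [pow_mul, ← ofReal_pow, Real.sq_sqrt q.cast_nonneg, ofReal_natCast]
  simp only [bcoef, show ¬ (2 * (n : ℤ) < 0) by omega, if_false,
    show (2 * (n : ℤ)).toNat = 2 * n by omega, hsqrt, mul_div_assoc]

theorem bcoef_of_neg (q : ℕ) (α β : ℂ) {k : ℤ} (hk : k < 0) : bcoef q α β k = 0 :=
  if_pos hk

theorem inert_generating_function_general (q : ℕ) (α β : ℂ)
    (hαβ : α * β = 1) (hne : α ≠ β) (t : ℂ)
    (hconv : ‖t * q‖ * max (‖α‖ ^ 2) (‖β‖ ^ 2) < 1) :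
    HasSum (fun n : ℕ => t ^ n * (bcoef q α β (2 * n) - bcoef q α β (2 * n - 2)))
      ((1 - t) * (1 + t * q) / ((1 - α ^ 2 * t * q) * (1 - β ^ 2 * t * q))) := by
  have hnorm : ∀ γ : ℂ, ‖γ‖ ^ 2 ≤ max (‖α‖ ^ 2) (‖β‖ ^ 2) → ‖γ ^ 2 * (t * q)‖ < 1 :=
    fun γ hγ => by
      rw [norm_mul, norm_pow, mul_comm]
      exact (mul_le_mul_of_nonneg_left hγ (norm_nonneg _)).trans_lt hconv
  have heven : HasSum (fun n : ℕ => t ^ n * bcoef q α β (2 * n))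
      ((1 + t * q) / ((1 - α ^ 2 * (t * q)) * (1 - β ^ 2 * (t * q)))) := by
    simpa only [bcoef_two_mul, mul_pow, mul_assoc] using
      hasSum_pow_mul_odd_pow_sub_div hαβ hne (hnorm α (le_max_left _ _))
        (hnorm β (le_max_right _ _))
  have hshift := heven.pow_mul_sub_shift (b := fun n => bcoef q α β (2 * n - 2))
    (bcoef_of_neg q α β (by norm_num)) fun n => by congr 1; push_cast; ring
  simpa only [mul_assoc, mul_div_assoc] using hshift

/-- The inert-case generating function identity:
`Σ_{n≥0} t^n (β_{2n} − β_{2n−2}) = (1−t)(1+tq)/((1−α²tq)(1−β²tq))`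
under `αβ = 1`, `α ≠ β`, and the convergence hypothesis
`|tq|·max(|α|²,|β|²) < 1`. -/
theorem inert_generating_function (q : ℕ) (hq : 2 ≤ q) (α β : ℂ)
    (hαβ : α * β = 1) (hne : α ≠ β) (t : ℂ)
    (hconv : ‖t * q‖ * max (‖α‖ ^ 2) (‖β‖ ^ 2) < 1) :
    HasSum (fun n : ℕ => t ^ n * (bcoef q α β (2 * n) - bcoef q α β (2 * n - 2)))
      ((1 - t) * (1 + t * q) / ((1 - α ^ 2 * t * q) * (1 - β ^ 2 * t * q))) :=
  inert_generating_function_general q α β hαβ hne t hconv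
end
end

section
/- The map u: H̃₂ × H̃₁ → H̃₃ given by u(Z₁, Z₂) = block-diag(Z₁, −Z̄₂) is well-defined (i.e. if i(Z̄₁−Z₁) and i(Z̄₂−Z₂) are positive definite, then so is i applied to the conjugate-difference of block-diag(Z₁,−Z̄₂)), and satisfies: if g₁ ∈ U(2,2)(ℝ), g₂ ∈ U(1,1)(ℝ) with g₁(iI₂) = Z₁ and g₂(i) = Z₂, then ι(g₁,g₂)(iI₃) = u(Z₁, Z₂). -/
open Matrix Complex
open scoped ComplexOrder

noncomputable section

abbrev ρ := Fin 2 ⊕ Fin 1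

/-- The embedding ι of display (3.1). -/
def iota (g : Matrix (Fin 2 ⊕ Fin 2) (Fin 2 ⊕ Fin 2) ℂ)
    (h : Matrix (Fin 1 ⊕ Fin 1) (Fin 1 ⊕ Fin 1) ℂ) :
    Matrix (ρ ⊕ ρ) (ρ ⊕ ρ) ℂ :=
  fromBlocks
    (fromBlocks g.toBlocks₁₁ 0 0 h.toBlocks₁₁)
    (fromBlocks g.toBlocks₁₂ 0 0 (-h.toBlocks₁₂))
    (fromBlocks g.toBlocks₂₁ 0 0 (-h.toBlocks₂₁))
    (fromBlocks g.toBlocks₂₂ 0 0 h.toBlocks₂₂)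

/-- Fractional linear action. -/
def act {m : Type*} [Fintype m] [DecidableEq m]
    (M : Matrix (m ⊕ m) (m ⊕ m) ℂ) (Z : Matrix m m ℂ) : Matrix m m ℂ :=
  (M.toBlocks₁₁ * Z + M.toBlocks₁₂) * (M.toBlocks₂₁ * Z + M.toBlocks₂₂)⁻¹

/-- Membership in the domain `H̃ₙ`: `i(Z* − Z)` positive definite. -/
def InDomain {m : Type*} [Fintype m] [DecidableEq m] (Z : Matrix m m ℂ) : Prop :=
  (Complex.I • (Zᴴ - Z)).PosDef

/-- `u(Z₁,Z₂) = blockdiag(Z₁, −Z̄₂)`. -/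
def uEmb (Z₁ : Matrix (Fin 2) (Fin 2) ℂ) (Z₂ : Matrix (Fin 1) (Fin 1) ℂ) :
    Matrix ρ ρ ℂ :=
  fromBlocks Z₁ 0 0 (-(Z₂.map (starRingEnd ℂ)))

/-!
Both diagonal blocks of `i(u* − u)` for `u = u(Z₁, Z₂)` are positive definite: the first is
`i(Z₁* − Z₁)` and the second is the transpose of `i(Z₂* − Z₂)`.

For the equivariance, `ι(g₁, g₂)` is the block sum of `g₁` and of `g₂` with its off-diagonal
entries negated, so it acts blockwise on `iI₃ = diag(iI₂, i)`. Writing `g₂ = (a b; c d)`, the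
`U(1,1)` relations `āc = c̄a`, `b̄d = d̄b`, `ād − c̄b = 1` give
`(ia − b) · conj(ic + d) = (iā − b̄)(d − ic)`; once `d − ic ≠ 0` this says that the twisted `g₂`
sends `i` to `−conj(g₂(i))`. And `d = ic` would force `b = ia`, hence `ād − c̄b = i(āc − c̄a) = 0`.
-/

open ComplexConjugate

theorem Matrix.PosDef.fromBlocks_zero_zero {m n : Type*} [Fintype m] [Fintype n]
    [DecidableEq m] [DecidableEq n] {A : Matrix m m ℂ} {B : Matrix n n ℂ}
    (hA : A.PosDef) (hB : B.PosDef) : (fromBlocks A 0 0 B).PosDef := by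
  have : Invertible A := hA.isUnit.invertible
  have hsemi : (fromBlocks A 0 0ᴴ B).PosSemidef :=
    (PosDef.fromBlocks₁₁ 0 B hA).mpr (by simpa using hB.posSemidef)
  rw [conjTranspose_zero] at hsemi
  rw [hsemi.posDef_iff_det_ne_zero, det_fromBlocks_zero₂₁]
  exact mul_ne_zero hA.det_pos.ne' hB.det_pos.ne'

section InDomain

variable {m n : Type*} [Fintype m] [DecidableEq m] [Fintype n] [DecidableEq n]

theorem InDomain.fromBlocks_zero_zero {Z : Matrix m m ℂ} {W : Matrix n n ℂ}
    (hZ : InDomain Z) (hW : InDomain W) : InDomain (fromBlocks Z 0 0 W) := by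
  unfold InDomain at *
  convert hZ.fromBlocks_zero_zero hW using 1
  rw [fromBlocks_conjTranspose, sub_eq_add_neg, fromBlocks_neg, fromBlocks_add, fromBlocks_smul]
  simp [sub_eq_add_neg]

theorem InDomain.neg_map_conj {Z : Matrix m m ℂ} (hZ : InDomain Z) :
    InDomain (-Z.map conj) := by
  have h : I • ((-Z.map conj)ᴴ - -Z.map conj) = (I • (Zᴴ - Z))ᵀ := by
    ext i j
    simp [neg_add_eq_sub]
  rw [InDomain, h]
  exact hZ.transpose

theorem InDomain.ne_zero [Nonempty m] {Z : Matrix m m ℂ} (hZ : InDomain Z) : Z ≠ 0 := by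
  rintro rfl
  simpa [InDomain] using hZ.diag_pos (i := Classical.arbitrary m)

theorem isUnit_denom_of_act_eq [Nonempty m] {g : Matrix (m ⊕ m) (m ⊕ m) ℂ} {W Z : Matrix m m ℂ}
    (hact : act g W = Z) (hZ : InDomain Z) : IsUnit (g.toBlocks₂₁ * W + g.toBlocks₂₂) := by
  by_contra h
  refine hZ.ne_zero ?_
  rw [← hact, act, nonsing_inv_apply_not_isUnit _ (by rwa [← isUnit_iff_isUnit_det]), mul_zero]

end InDomain

def blockSum {m n : Type*} (g : Matrix (m ⊕ m) (m ⊕ m) ℂ) (h : Matrix (n ⊕ n) (n ⊕ n) ℂ) :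
    Matrix ((m ⊕ n) ⊕ (m ⊕ n)) ((m ⊕ n) ⊕ (m ⊕ n)) ℂ :=
  fromBlocks
    (fromBlocks g.toBlocks₁₁ 0 0 h.toBlocks₁₁) (fromBlocks g.toBlocks₁₂ 0 0 h.toBlocks₁₂)
    (fromBlocks g.toBlocks₂₁ 0 0 h.toBlocks₂₁) (fromBlocks g.toBlocks₂₂ 0 0 h.toBlocks₂₂)

theorem act_blockSum {m n : Type*} [Fintype m] [DecidableEq m] [Fintype n] [DecidableEq n]
    {g : Matrix (m ⊕ m) (m ⊕ m) ℂ} {h : Matrix (n ⊕ n) (n ⊕ n) ℂ}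
    {Z : Matrix m m ℂ} {W : Matrix n n ℂ} (hg : IsUnit (g.toBlocks₂₁ * Z + g.toBlocks₂₂))
    (hh : IsUnit (h.toBlocks₂₁ * W + h.toBlocks₂₂)) :
    act (blockSum g h) (fromBlocks Z 0 0 W) = fromBlocks (act g Z) 0 0 (act h W) := by
  simp only [act, blockSum, toBlocks_fromBlocks₁₁, toBlocks_fromBlocks₁₂, toBlocks_fromBlocks₂₁,
    toBlocks_fromBlocks₂₂, fromBlocks_multiply, fromBlocks_add, Matrix.mul_zero, Matrix.zero_mul,
    add_zero, zero_add]
  rw [inv_fromBlocks_zero₂₁_of_isUnit_iff _ _ _ (iff_of_true hg hh), fromBlocks_multiply]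
  simp

def negOffDiag {n : Type*} (h : Matrix (n ⊕ n) (n ⊕ n) ℂ) : Matrix (n ⊕ n) (n ⊕ n) ℂ :=
  fromBlocks h.toBlocks₁₁ (-h.toBlocks₁₂) (-h.toBlocks₂₁) h.toBlocks₂₂

theorem iota_eq_blockSum (g : Matrix (Fin 2 ⊕ Fin 2) (Fin 2 ⊕ Fin 2) ℂ)
    (h : Matrix (Fin 1 ⊕ Fin 1) (Fin 1 ⊕ Fin 1) ℂ) : iota g h = blockSum g (negOffDiag h) := by
  simp [iota, blockSum, negOffDiag]

theorem isUnit_iff_apply_ne_zero_of_fin_one (M : Matrix (Fin 1) (Fin 1) ℂ) :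
    IsUnit M ↔ M 0 0 ≠ 0 := by
  rw [isUnit_iff_isUnit_det, det_fin_one, isUnit_iff_ne_zero]

theorem act_smul_one_apply_fin_one (h : Matrix (Fin 1 ⊕ Fin 1) (Fin 1 ⊕ Fin 1) ℂ) (z : ℂ) :
    act h (z • 1) 0 0 = (z * h (.inl 0) (.inl 0) + h (.inl 0) (.inr 0)) /
      (z * h (.inr 0) (.inl 0) + h (.inr 0) (.inr 0)) := by
  simp [act, toBlocks₁₁, toBlocks₁₂, toBlocks₂₁, toBlocks₂₂, div_eq_mul_inv]

theorem conj_mobius_I_of_relations {a b c d : ℂ} (hac : conj a * c = conj c * a)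
    (hbd : conj b * d = conj d * b) (had : conj a * d - conj c * b = 1) (hu : I * c + d ≠ 0) :
    -(I * c) + d ≠ 0 ∧ (I * a - b) / (-(I * c) + d) = -conj ((I * a + b) / (I * c + d)) := by
  have had' : a * conj d - c * conj b = 1 := by simpa using congrArg conj had
  have hu' : conj (I * c + d) ≠ 0 := (map_ne_zero _).mpr hu
  have hcross : (I * a - b) * conj (I * c + d) = -conj (I * a + b) * (-(I * c) + d) := by
    simp only [map_add, map_mul, conj_I]
    linear_combination (-1 : ℂ) * hac + I * (had' - had) + hbd + (conj a * c - a * conj c) * I_sq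
  have hv : -(I * c) + d ≠ 0 := by
    intro hv
    rw [hv, mul_zero, mul_eq_zero, or_iff_left hu'] at hcross
    have : (1 : ℂ) = 0 := by
      linear_combination -had + conj a * hv + conj c * hcross + I * hac
    exact one_ne_zero this
  refine ⟨hv, ?_⟩
  rw [map_div₀, ← neg_div, div_eq_div_iff hv hu', hcross]

theorem unitary11_relations {g : Matrix (Fin 1 ⊕ Fin 1) (Fin 1 ⊕ Fin 1) ℂ}
    (hg : gᴴ * (fromBlocks 0 1 (-1) 0) * g = fromBlocks 0 1 (-1) 0) :
    conj (g (.inl 0) (.inl 0)) * g (.inr 0) (.inl 0) =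
        conj (g (.inr 0) (.inl 0)) * g (.inl 0) (.inl 0) ∧
      conj (g (.inl 0) (.inr 0)) * g (.inr 0) (.inr 0) =
        conj (g (.inr 0) (.inr 0)) * g (.inl 0) (.inr 0) ∧
      conj (g (.inl 0) (.inl 0)) * g (.inr 0) (.inr 0) -
        conj (g (.inr 0) (.inl 0)) * g (.inl 0) (.inr 0) = 1 := by
  have entry (i j) := congrFun (congrFun hg i) j
  have e11 := entry (.inl 0) (.inl 0)
  have e12 := entry (.inl 0) (.inr 0)
  have e22 := entry (.inr 0) (.inr 0)
  simp only [Matrix.mul_apply, conjTranspose_apply, RCLike.star_def, Fintype.sum_sum_type,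
    Finset.univ_unique, Fin.default_eq_zero, Finset.sum_singleton, fromBlocks_apply₁₁,
    fromBlocks_apply₁₂, fromBlocks_apply₂₁, fromBlocks_apply₂₂, Matrix.zero_apply,
    Matrix.neg_apply, one_apply_eq, mul_zero, mul_neg, mul_one, zero_add, add_zero, neg_mul,
    Finset.sum_neg_distrib] at e11 e12 e22
  exact ⟨by linear_combination e11, by linear_combination e22, by linear_combination e12⟩

theorem act_negOffDiag_I {g : Matrix (Fin 1 ⊕ Fin 1) (Fin 1 ⊕ Fin 1) ℂ}
    (hg : gᴴ * (fromBlocks 0 1 (-1) 0) * g = fromBlocks 0 1 (-1) 0)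
    (hu : IsUnit (g.toBlocks₂₁ * (I • 1) + g.toBlocks₂₂)) :
    IsUnit ((negOffDiag g).toBlocks₂₁ * (I • 1) + (negOffDiag g).toBlocks₂₂) ∧
      act (negOffDiag g) (I • 1) = -(act g (I • 1)).map conj := by
  obtain ⟨hac, hbd, had⟩ := unitary11_relations hg
  rw [isUnit_iff_apply_ne_zero_of_fin_one] at hu ⊢
  simp only [toBlocks₂₁, toBlocks₂₂, Algebra.mul_smul_comm, mul_one, smul_of, Matrix.add_apply,
    of_apply, Pi.smul_apply, smul_eq_mul, ne_eq] at hu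
  obtain ⟨hv, heq⟩ := conj_mobius_I_of_relations hac hbd had hu
  refine ⟨by simpa [negOffDiag, toBlocks₂₁, toBlocks₂₂] using hv, ?_⟩
  ext i j
  rw [Subsingleton.elim i 0, Subsingleton.elim j 0, act_smul_one_apply_fin_one, neg_apply,
    map_apply, act_smul_one_apply_fin_one]
  simp only [negOffDiag, fromBlocks_apply₁₁, fromBlocks_apply₁₂, fromBlocks_apply₂₁,
    fromBlocks_apply₂₂, toBlocks₁₁, toBlocks₁₂, toBlocks₂₁, toBlocks₂₂, of_apply, Matrix.neg_apply,
    mul_neg, ← sub_eq_add_neg]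
  exact heq

theorem uEmb_wellDefined_and_equivariant_general
    (Z₁ : Matrix (Fin 2) (Fin 2) ℂ) (Z₂ : Matrix (Fin 1) (Fin 1) ℂ)
    (hZ₁ : InDomain Z₁) (hZ₂ : InDomain Z₂)
    (g₁ : Matrix (Fin 2 ⊕ Fin 2) (Fin 2 ⊕ Fin 2) ℂ)
    (g₂ : Matrix (Fin 1 ⊕ Fin 1) (Fin 1 ⊕ Fin 1) ℂ)
    (hg₂ : g₂ᴴ * (fromBlocks 0 1 (-1) 0) * g₂ = fromBlocks 0 1 (-1) 0)
    (hact₁ : act g₁ (Complex.I • 1) = Z₁)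
    (hact₂ : act g₂ (Complex.I • 1) = Z₂) :
    InDomain (uEmb Z₁ Z₂) ∧ act (iota g₁ g₂) (Complex.I • 1) = uEmb Z₁ Z₂ := by
  refine ⟨hZ₁.fromBlocks_zero_zero hZ₂.neg_map_conj, ?_⟩
  obtain ⟨hunit₂, hact₂'⟩ := act_negOffDiag_I hg₂ (isUnit_denom_of_act_eq hact₂ hZ₂)
  have hI : (I • 1 : Matrix ρ ρ ℂ) = fromBlocks (I • 1) 0 0 (I • 1) := by
    rw [← fromBlocks_one, fromBlocks_smul]
    simp
  rw [iota_eq_blockSum, hI, act_blockSum (isUnit_denom_of_act_eq hact₁ hZ₁) hunit₂, hact₂', hact₁,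
    hact₂, uEmb]

/-- `u : H̃₂ × H̃₁ → H̃₃` is well defined, and if `g₁(iI₂) = Z₁`, `g₂(i) = Z₂`
for `g₁ ∈ U(2,2)(ℝ)`, `g₂ ∈ U(1,1)(ℝ)`, then `ι(g₁,g₂)(iI₃) = u(Z₁,Z₂)`. -/
theorem uEmb_wellDefined_and_equivariant
    (Z₁ : Matrix (Fin 2) (Fin 2) ℂ) (Z₂ : Matrix (Fin 1) (Fin 1) ℂ)
    (hZ₁ : InDomain Z₁) (hZ₂ : InDomain Z₂)
    (g₁ : Matrix (Fin 2 ⊕ Fin 2) (Fin 2 ⊕ Fin 2) ℂ)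
    (g₂ : Matrix (Fin 1 ⊕ Fin 1) (Fin 1 ⊕ Fin 1) ℂ)
    (hg₁ : g₁ᴴ * (fromBlocks 0 1 (-1) 0) * g₁ = fromBlocks 0 1 (-1) 0)
    (hg₂ : g₂ᴴ * (fromBlocks 0 1 (-1) 0) * g₂ = fromBlocks 0 1 (-1) 0)
    (hact₁ : act g₁ (Complex.I • 1) = Z₁)
    (hact₂ : act g₂ (Complex.I • 1) = Z₂) :
    InDomain (uEmb Z₁ Z₂) ∧ act (iota g₁ g₂) (Complex.I • 1) = uEmb Z₁ Z₂ :=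
  uEmb_wellDefined_and_equivariant_general Z₁ Z₂ hZ₁ hZ₂ g₁ g₂ hg₂ hact₁ hact₂

end
end
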